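/- Exit law from the labyrinth: let P be stochastic on I ⊔ E with (H1): P(e,i) = π(i) for all e ∈ E, i ∈ I, and (H2): π(E) π_Eᵗ = π_Eᵗ P_{E×E}, where π is a stationary distribution with 0 < π(I) < 1. Let X start from π̂_E = π(E)^{-1} π_E and τ_I = inf{n > 0 : X_n ∈ I}. Then for all i ∈ I and n ≥ 1: P_{π̂_E}(X_{τ_I} = i, τ_I = n) = π̂_I(i) · π(E)^{n−1} π(I), where π̂_I(i) = π(i)/π(I). In particular τ_I ∼ Geometric(π(I)), X_{τ_I} ∼ π̂_I, and X_{τ_I} is independent of τ_I. -/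

import Mathlib

/-!
Started from π̂_E, the exit at time n + 1 through i is a sum over paths of length n inside E,
which is the matrix expression π̂_E P_{E×E}ⁿ P_{E×{i}}. By (H2), π_E is a left eigenvector of
P_{E×E} with eigenvalue π(E), so this equals π(E)ⁿ π̂_E P_{E×{i}}, and by (H1) every state of E
enters i with probability π(i). Dividing by π(E) = 1 − π(I) ≠ 0 leaves π(E)ⁿ π(i).
-/

open Finset Matrix

section PathSums

variable {R E : Type*} [CommSemiring R] [Fintype E] [DecidableEq E]

theorem sum_path_weight_eq_vecMul_pow_dotProduct (Q : Matrix E E R) (μ g : E → R) (n : ℕ) :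
    ∑ z : Fin (n + 1) → E, μ (z 0) * (∏ k : Fin n, Q (z k.castSucc) (z k.succ)) * g (z (Fin.last n))
      = (μ ᵥ* Q ^ n) ⬝ᵥ g := by
  induction n generalizing μ with
  | zero =>
    rw [← (Equiv.funUnique (Fin 1) E).symm.sum_comp]
    simp [dotProduct]
  | succ n ih =>
    rw [pow_succ', ← vecMul_vecMul, ← ih,
      ← (Fin.consEquiv fun _ : Fin (n + 2) => E).sum_comp, Fintype.sum_prod_type, Finset.sum_comm]
    refine Finset.sum_congr rfl fun z _ => ?_
    simp only [Fin.consEquiv_apply, Fin.prod_univ_succ, Fin.cons_zero, Fin.castSucc_zero,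
      Fin.cons_succ, ← Fin.succ_castSucc, ← Fin.succ_last, vecMul, dotProduct, Finset.sum_mul]
    exact Finset.sum_congr rfl fun e _ => by ring

theorem vecMul_pow_of_vecMul_eq_smul {Q : Matrix E E R} {μ : E → R} {c : R}
    (h : μ ᵥ* Q = c • μ) (n : ℕ) : μ ᵥ* Q ^ n = c ^ n • μ := by
  induction n with
  | zero => simp
  | succ n ih => rw [pow_succ, ← vecMul_vecMul, ih, smul_vecMul, h, smul_smul, pow_succ]

end PathSums

theorem stmt12_general {I E : Type*} [Fintype I] [Fintype E]
    (P : (I ⊕ E) → (I ⊕ E) → ℝ) (π : (I ⊕ E) → ℝ)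
    (hπsum : ∑ a, π a = 1)
    (hH1 : ∀ (e : E) (i : I), P (Sum.inr e) (Sum.inl i) = π (Sum.inl i))
    (hπI0 : 0 < ∑ i : I, π (Sum.inl i)) (hπI1 : ∑ i : I, π (Sum.inl i) < 1)
    (hH2 : ∀ e : E, ∑ d : E, π (Sum.inr d) * P (Sum.inr d) (Sum.inr e)
      = (∑ e' : E, π (Sum.inr e')) * π (Sum.inr e)) :
    ∀ (n : ℕ) (i : I),
      ∑ z : Fin (n + 1) → E,
        (π (Sum.inr (z 0)) / ∑ e' : E, π (Sum.inr e'))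
          * (∏ k : Fin n, P (Sum.inr (z k.castSucc)) (Sum.inr (z k.succ)))
          * P (Sum.inr (z (Fin.last n))) (Sum.inl i)
      = (π (Sum.inl i) / ∑ i' : I, π (Sum.inl i'))
          * (∑ e' : E, π (Sum.inr e')) ^ n * (∑ i' : I, π (Sum.inl i')) := by
  intro n i
  classical
  set πE := ∑ e' : E, π (Sum.inr e')
  set πI := ∑ i' : I, π (Sum.inl i')
  have hπE : πE ≠ 0 := by
    have : πI + πE = 1 := by rw [← hπsum, Fintype.sum_sum_type]
    linarith
  have heigen : (fun e => π (Sum.inr e)) ᵥ* of (fun d e => P (Sum.inr d) (Sum.inr e))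
      = πE • fun e => π (Sum.inr e) := funext hH2
  have hpaths := sum_path_weight_eq_vecMul_pow_dotProduct
    (of fun d e => P (Sum.inr d) (Sum.inr e)) (fun e => π (Sum.inr e))
    (fun e => P (Sum.inr e) (Sum.inl i)) n
  simp only [of_apply] at hpaths
  calc _ = (∑ z : Fin (n + 1) → E, π (Sum.inr (z 0))
          * (∏ k : Fin n, P (Sum.inr (z k.castSucc)) (Sum.inr (z k.succ)))
          * P (Sum.inr (z (Fin.last n))) (Sum.inl i)) / πE := by
        rw [Finset.sum_div]
        exact Finset.sum_congr rfl fun z _ => by ring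
    _ = πE ^ n * (πE * π (Sum.inl i)) / πE := by
        rw [hpaths, vecMul_pow_of_vecMul_eq_smul heigen, smul_dotProduct, smul_eq_mul, dotProduct]
        simp only [hH1, ← Finset.sum_mul]
        rfl
    _ = _ := by
        field_simp

/-- Exit law from the labyrinth: under (H1) and (H2), the chain started from
π̂_E = π(E)⁻¹π_E satisfies, for all i ∈ I and exit time n+1 (n ≥ 0),
P(X_{τ_I} = i, τ_I = n+1) = π̂_I(i)·π(E)ⁿ·π(I); hence τ_I ∼ Geometric(π(I)),
X_{τ_I} ∼ π̂_I, and the two are independent. -/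
theorem stmt12 {I E : Type*} [Fintype I] [Fintype E] [Nonempty I] [Nonempty E]
    (P : (I ⊕ E) → (I ⊕ E) → ℝ) (π : (I ⊕ E) → ℝ)
    (hPnn : ∀ a b, 0 ≤ P a b) (hProw : ∀ a, ∑ b, P a b = 1)
    (hπpos : ∀ a, 0 < π a) (hπsum : ∑ a, π a = 1)
    (hstat : ∀ b, ∑ a, π a * P a b = π b)
    (hH1 : ∀ (e : E) (i : I), P (Sum.inr e) (Sum.inl i) = π (Sum.inl i))
    (hπI0 : 0 < ∑ i : I, π (Sum.inl i)) (hπI1 : ∑ i : I, π (Sum.inl i) < 1)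
    (hH2 : ∀ e : E, ∑ d : E, π (Sum.inr d) * P (Sum.inr d) (Sum.inr e)
      = (∑ e' : E, π (Sum.inr e')) * π (Sum.inr e)) :
    ∀ (n : ℕ) (i : I),
      ∑ z : Fin (n + 1) → E,
        (π (Sum.inr (z 0)) / ∑ e' : E, π (Sum.inr e'))
          * (∏ k : Fin n, P (Sum.inr (z k.castSucc)) (Sum.inr (z k.succ)))
          * P (Sum.inr (z (Fin.last n))) (Sum.inl i)
      = (π (Sum.inl i) / ∑ i' : I, π (Sum.inl i'))
          * (∑ e' : E, π (Sum.inr e')) ^ n * (∑ i' : I, π (Sum.inl i')) :=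
  stmt12_general P π hπsum hH1 hπI0 hπI1 hH2
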